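/- Fix n ∈ ℕ, real numbers a₁ > 0, a₂ > 0, b₂ ∈ ℝ and b₁ ≠ 0. For h > 0 let b_n(h) and u_n(h) denote the continuous Bannai–Ito recurrence coefficients evaluated at parameters (α,β,γ,δ) = (a₁, b₁/h, a₂, b₂/h). Then as h → 0⁺ one has (h/(2b₁))·b_n(h) → 1 − A_n − C_n and (h/(2b₁))²·u_n(h) → A_{n−1}·C_n, where A_n = (1−b₂/b₁)(n+4a₁+2)/(2n+4a₁+4a₂+4) for n even, A_n = (1+b₂/b₁)(n+4a₁+4a₂+3)/(2n+4a₁+4a₂+4) for n odd, C_n = (1+b₂/b₁)n/(2n+4a₁+4a₂+2) for n even, and C_n = (1−b₂/b₁)(n+4a₂+1)/(2n+4a₁+4a₂+2) for n odd. -/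

import Mathlib

open Filter

/-- The diagonal recurrence coefficient `bₙ` of the continuous Bannai–Ito polynomials
with parameters `(α,β,γ,δ)`. -/
noncomputable def cBIb (α β γ δ : ℝ) (n : ℕ) : ℝ :=
  if Even n then
    2 * β - ((n : ℝ) + 4 * α + 2) * (β - δ) / ((n : ℝ) + 2 * α + 2 * γ + 2)
      - (n : ℝ) * (β + δ) / ((n : ℝ) + 2 * α + 2 * γ + 1)
  else
    2 * β - ((n : ℝ) + 4 * α + 4 * γ + 3) * (β + δ) / ((n : ℝ) + 2 * α + 2 * γ + 2)
      - ((n : ℝ) + 4 * γ + 1) * (β - δ) / ((n : ℝ) + 2 * α + 2 * γ + 1)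

/-- The off-diagonal recurrence coefficient `uₙ` of the continuous Bannai–Ito polynomials
with parameters `(α,β,γ,δ)`; `|z|²` is the squared modulus `Complex.normSq`. -/
noncomputable def cBIu (α β γ δ : ℝ) (n : ℕ) : ℝ :=
  if Even n then
    (n : ℝ) * ((n : ℝ) + 4 * α + 4 * γ + 2) *
        Complex.normSq (((n : ℝ) + 2 * (α + γ) + 1 : ℝ) + (2 * (β + δ) : ℝ) * Complex.I) /
      (4 * ((n : ℝ) + 2 * α + 2 * γ + 1) ^ 2)
  else
    ((n : ℝ) + 4 * α + 1) * ((n : ℝ) + 4 * γ + 1) *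
        Complex.normSq (((n : ℝ) + 2 * (α + γ) + 1 : ℝ) + (2 * (β - δ) : ℝ) * Complex.I) /
      (4 * ((n : ℝ) + 2 * α + 2 * γ + 1) ^ 2)

/-- The coefficient `Aₙ` of the monic big `-1` Jacobi recurrence with parameters
`(4a₁+1, 4a₂+1, -b₂/b₁)`, in the contracted form of the statement. -/
noncomputable def bigM1A' (a₁ a₂ b₁ b₂ : ℝ) (n : ℕ) : ℝ :=
  if Even n then
    (1 - b₂ / b₁) * ((n : ℝ) + 4 * a₁ + 2) / (2 * (n : ℝ) + 4 * a₁ + 4 * a₂ + 4)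
  else
    (1 + b₂ / b₁) * ((n : ℝ) + 4 * a₁ + 4 * a₂ + 3) / (2 * (n : ℝ) + 4 * a₁ + 4 * a₂ + 4)

/-- The coefficient `Cₙ` of the monic big `-1` Jacobi recurrence with parameters
`(4a₁+1, 4a₂+1, -b₂/b₁)`, in the contracted form of the statement. -/
noncomputable def bigM1C' (a₁ a₂ b₁ b₂ : ℝ) (n : ℕ) : ℝ :=
  if Even n then
    (1 + b₂ / b₁) * (n : ℝ) / (2 * (n : ℝ) + 4 * a₁ + 4 * a₂ + 2)
  else
    (1 - b₂ / b₁) * ((n : ℝ) + 4 * a₂ + 1) / (2 * (n : ℝ) + 4 * a₁ + 4 * a₂ + 2)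

/-!
The coefficient `bₙ` is homogeneous of degree one in `(β, δ)`, so `h · bₙ(a₁, b₁/h, a₂, b₂/h)`
does not depend on `h`. In `uₙ` the parameters enter only through `|x + i y/h|²`, and
`h² |x + i y/h|² = h² x² + y²`, so `h² uₙ` is a polynomial in `h` whose value at `h = 0` is the
quadratic part of `uₙ` in `(β, δ)`. What remains are identities of rational functions.
-/

open Complex Topology

theorem cBIb_div_div (α β γ δ h : ℝ) (n : ℕ) :
    cBIb α (β / h) γ (δ / h) n = cBIb α β γ δ n / h := by
  unfold cBIb
  split_ifs <;> ring

theorem cBIb_div_two_mul_eq_bigM1 {a₁ a₂ b₁ : ℝ} (b₂ : ℝ) (n : ℕ) (hb₁ : b₁ ≠ 0) :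
    cBIb a₁ b₁ a₂ b₂ n / (2 * b₁) = 1 - bigM1A' a₁ a₂ b₁ b₂ n - bigM1C' a₁ a₂ b₁ b₂ n := by
  have hD₁ : 2 * (n : ℝ) + 4 * a₁ + 4 * a₂ + 2 = 2 * ((n : ℝ) + 2 * a₁ + 2 * a₂ + 1) := by ring
  have hD₂ : 2 * (n : ℝ) + 4 * a₁ + 4 * a₂ + 4 = 2 * ((n : ℝ) + 2 * a₁ + 2 * a₂ + 2) := by ring
  unfold cBIb bigM1A' bigM1C'
  rw [hD₁, hD₂]
  split_ifs <;> field_simp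

theorem tendsto_sq_mul_normSq_add_div_mul_I (x y : ℝ) :
    Tendsto (fun h : ℝ => h ^ 2 * normSq (x + (y / h : ℝ) * I)) (𝓝[≠] 0) (𝓝 (y ^ 2)) := by
  have hpoly : Tendsto (fun h : ℝ => (h * x) ^ 2 + y ^ 2) (𝓝[≠] 0) (𝓝 ((0 * x) ^ 2 + y ^ 2)) :=
    ((Continuous.tendsto (by fun_prop) 0).mono_left nhdsWithin_le_nhds)
  rw [zero_mul, zero_pow two_ne_zero, zero_add] at hpoly
  refine hpoly.congr' ?_
  filter_upwards [self_mem_nhdsWithin] with h (hh : h ≠ 0)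
  rw [normSq_add_mul_I]
  field_simp

/-- `uₙ` is a quadratic polynomial in `(β, δ)`; this is its homogeneous quadratic part. -/
noncomputable def cBIuQuadraticPart (α β γ δ : ℝ) (n : ℕ) : ℝ :=
  if Even n then
    (n : ℝ) * ((n : ℝ) + 4 * α + 4 * γ + 2) * (β + δ) ^ 2 / ((n : ℝ) + 2 * α + 2 * γ + 1) ^ 2
  else
    ((n : ℝ) + 4 * α + 1) * ((n : ℝ) + 4 * γ + 1) * (β - δ) ^ 2 /
      ((n : ℝ) + 2 * α + 2 * γ + 1) ^ 2

theorem tendsto_sq_mul_cBIu_div_div (α β γ δ : ℝ) (n : ℕ) :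
    Tendsto (fun h : ℝ => h ^ 2 * cBIu α (β / h) γ (δ / h) n) (𝓝[≠] 0)
      (𝓝 (cBIuQuadraticPart α β γ δ n)) := by
  unfold cBIu cBIuQuadraticPart
  split_ifs
  · convert (tendsto_sq_mul_normSq_add_div_mul_I ((n : ℝ) + 2 * (α + γ) + 1)
      (2 * (β + δ))).const_mul
      ((n : ℝ) * ((n : ℝ) + 4 * α + 4 * γ + 2) / (4 * ((n : ℝ) + 2 * α + 2 * γ + 1) ^ 2)) using 2
    · ring_nf
    · -- as an atom `D`, `(4 * D ^ 2)⁻¹` splits as `4⁻¹ * (D ^ 2)⁻¹`; `ring` would expand the sum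
      generalize (n : ℝ) + 2 * α + 2 * γ + 1 = D
      ring
  · convert (tendsto_sq_mul_normSq_add_div_mul_I ((n : ℝ) + 2 * (α + γ) + 1)
      (2 * (β - δ))).const_mul
      (((n : ℝ) + 4 * α + 1) * ((n : ℝ) + 4 * γ + 1) / (4 * ((n : ℝ) + 2 * α + 2 * γ + 1) ^ 2))
      using 2
    · ring_nf
    · generalize (n : ℝ) + 2 * α + 2 * γ + 1 = D
      ring

theorem bigM1A'_sub_one {a₁ a₂ b₁ b₂ : ℝ} {n : ℕ} (hn : n ≠ 0) :
    bigM1A' a₁ a₂ b₁ b₂ (n - 1) =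
      if Even n then
        (1 + b₂ / b₁) * ((n : ℝ) + 4 * a₁ + 4 * a₂ + 2) / (2 * (n : ℝ) + 4 * a₁ + 4 * a₂ + 2)
      else
        (1 - b₂ / b₁) * ((n : ℝ) + 4 * a₁ + 1) / (2 * (n : ℝ) + 4 * a₁ + 4 * a₂ + 2) := by
  obtain ⟨m, rfl⟩ := Nat.exists_eq_succ_of_ne_zero hn
  simp only [Nat.succ_sub_one, bigM1A', Nat.even_add_one, ite_not, Nat.cast_succ]
  split_ifs <;> ring_nf

theorem cBIuQuadraticPart_div_sq_eq_bigM1 {a₁ a₂ b₁ : ℝ} (b₂ : ℝ) (n : ℕ) (hb₁ : b₁ ≠ 0) :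
    cBIuQuadraticPart a₁ b₁ a₂ b₂ n / (2 * b₁) ^ 2 =
      bigM1A' a₁ a₂ b₁ b₂ (n - 1) * bigM1C' a₁ a₂ b₁ b₂ n := by
  rcases eq_or_ne n 0 with rfl | hn
  · simp [cBIuQuadraticPart, bigM1C']
  have hD : 2 * (n : ℝ) + 4 * a₁ + 4 * a₂ + 2 = 2 * ((n : ℝ) + 2 * a₁ + 2 * a₂ + 1) := by ring
  rw [bigM1A'_sub_one hn]
  unfold cBIuQuadraticPart bigM1C'
  rw [hD]
  split_ifs <;> field_simp

theorem continuousBannaiIto_to_bigM1Jacobi_limit_general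
    (n : ℕ) (a₁ a₂ b₁ b₂ : ℝ) (hb₁ : b₁ ≠ 0) :
    Tendsto (fun h : ℝ => (h / (2 * b₁)) * cBIb a₁ (b₁ / h) a₂ (b₂ / h) n)
      (nhdsWithin 0 (Set.Ioi 0))
      (nhds (1 - bigM1A' a₁ a₂ b₁ b₂ n - bigM1C' a₁ a₂ b₁ b₂ n)) ∧
    Tendsto (fun h : ℝ => (h / (2 * b₁)) ^ 2 * cBIu a₁ (b₁ / h) a₂ (b₂ / h) n)
      (nhdsWithin 0 (Set.Ioi 0))
      (nhds (bigM1A' a₁ a₂ b₁ b₂ (n - 1) * bigM1C' a₁ a₂ b₁ b₂ n)) := by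
  constructor
  · rw [← cBIb_div_two_mul_eq_bigM1 b₂ n hb₁]
    refine tendsto_const_nhds.congr' ?_
    filter_upwards [self_mem_nhdsWithin] with h (hh : 0 < h)
    rw [cBIb_div_div]
    field_simp
  · have hpos : 𝓝[>] (0 : ℝ) ≤ 𝓝[≠] 0 := nhdsWithin_mono _ fun h hh => ne_of_gt hh
    rw [← cBIuQuadraticPart_div_sq_eq_bigM1 b₂ n hb₁]
    convert ((tendsto_sq_mul_cBIu_div_div a₁ b₁ a₂ b₂ n).mono_left hpos).div_const
      ((2 * b₁) ^ 2) using 2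
    ring

/-- the `h → 0⁺` contraction of the continuous Bannai–Ito recurrence
coefficients with parameters `(a₁, b₁/h, a₂, b₂/h)` (variable rescaled by `2b₁/h`)
yields the recurrence data `1 - Aₙ - Cₙ` and `Aₙ₋₁ Cₙ` of the monic big `-1` Jacobi
polynomials `Jₙ(x; 4a₁+1, 4a₂+1, -b₂/b₁)`. -/
theorem continuousBannaiIto_to_bigM1Jacobi_limit
    (n : ℕ) (a₁ a₂ b₁ b₂ : ℝ) (ha₁ : a₁ > 0) (ha₂ : a₂ > 0) (hb₁ : b₁ ≠ 0) :
    Tendsto (fun h : ℝ => (h / (2 * b₁)) * cBIb a₁ (b₁ / h) a₂ (b₂ / h) n)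
      (nhdsWithin 0 (Set.Ioi 0))
      (nhds (1 - bigM1A' a₁ a₂ b₁ b₂ n - bigM1C' a₁ a₂ b₁ b₂ n)) ∧
    Tendsto (fun h : ℝ => (h / (2 * b₁)) ^ 2 * cBIu a₁ (b₁ / h) a₂ (b₂ / h) n)
      (nhdsWithin 0 (Set.Ioi 0))
      (nhds (bigM1A' a₁ a₂ b₁ b₂ (n - 1) * bigM1C' a₁ a₂ b₁ b₂ n)) :=
  continuousBannaiIto_to_bigM1Jacobi_limit_general n a₁ a₂ b₁ b₂ hb₁
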